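/- arXiv:2510.00162 — 5 statements merged into one kernel-verified Lean document; each statement's English description precedes it below -/
import Mathlib

section
/- Among all connected graphs on k vertices, the path graph P_k maximizes the sum of pairwise shortest-path distances (equivalently, the average distance between pairs of distinct vertices). -/
/-!
Remove from a connected graph on `n + 1` vertices a vertex `v` whose deletion leaves it connected
(a leaf of a spanning tree). Distances between the other vertices can only grow, so by induction
they contribute at most as much as in the path on `n` vertices. The distances from `v` add up to
at most `0 + 1 + ⋯ + n`, because for `i < d(v, w)` the first `i + 1` vertices of a shortest walk
from `v` to `w` lie at the distinct distances `0, …, i`; so the ball of radius `i` has at least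
`i + 1` vertices. The path on `n + 1` vertices exceeds the path on `n` vertices by exactly twice
this amount.
-/

open Finset

lemma Finset.sum_eq_sum_range_card_filter_lt {ι : Type*} (s : Finset ι) (f : ι → ℕ) {n : ℕ}
    (hf : ∀ x ∈ s, f x ≤ n) : ∑ x ∈ s, f x = ∑ i ∈ range n, #{x ∈ s | i < f x} := by
  simp_rw [card_filter]
  rw [sum_comm]
  refine sum_congr rfl fun x hx => ?_
  have hrange : {i ∈ range n | i < f x} = range (f x) := by
    ext i
    simp only [mem_filter, mem_range]
    have := hf x hx
    omega
  rw [sum_boole, Nat.cast_id, hrange, card_range]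

lemma Nat.sum_range_sum_range_dist_succ (n : ℕ) :
    ∑ i ∈ range (n + 1), ∑ j ∈ range (n + 1), Nat.dist i j =
      ∑ i ∈ range n, ∑ j ∈ range n, Nat.dist i j + 2 * ∑ i ∈ range (n + 1), i := by
  have hlast : ∑ i ∈ range (n + 1), Nat.dist i n = ∑ i ∈ range (n + 1), i := by
    rw [← sum_range_reflect]
    refine sum_congr rfl fun i hi => ?_
    rw [mem_range] at hi
    simp only [Nat.dist]
    omega
  have hrow : ∑ j ∈ range n, Nat.dist n j = ∑ i ∈ range (n + 1), Nat.dist i n := by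
    rw [sum_range_succ, Nat.dist_self, add_zero]
    exact sum_congr rfl fun j _ => Nat.dist_comm n j
  rw [← hlast, two_mul]
  nth_rw 1 [← hrow]
  simp only [sum_range_succ, sum_add_distrib]
  ring

namespace SimpleGraph

variable {V : Type*} {G : SimpleGraph V}

lemma Walk.dist_getVert_of_length_eq_dist {u v : V} {p : G.Walk u v}
    (hp : p.length = G.dist u v) {n : ℕ} (hn : n ≤ p.length) :
    G.dist u (p.getVert n) = n := by
  rw [← length_eq_dist_of_subwalk hp (p.isSubwalk_take n), Walk.take_length]
  exact min_eq_left hn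

lemma Reachable.dist_map_le {W : Type*} {G' : SimpleGraph W} (f : G →g G') {u v : V}
    (h : G.Reachable u v) : G'.dist (f u) (f v) ≤ G.dist u v := by
  obtain ⟨p, hp⟩ := h.exists_walk_length_eq_dist
  rw [← hp, ← p.length_map f]
  exact dist_le _

lemma dist_lt_card [Fintype V] (u v : V) : G.dist u v < Fintype.card V := by
  by_cases h : G.Reachable u v
  · obtain ⟨p, hp, hlen⟩ := h.exists_path_of_dist
    exact hlen ▸ hp.length_lt
  · rw [dist_eq_zero_of_not_reachable h]
    exact Fintype.card_pos_iff.mpr ⟨u⟩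

section Fintype

variable [Fintype V]

noncomputable def transmission (G : SimpleGraph V) (v : V) : ℕ := ∑ w, G.dist v w

/-- Summed over ordered pairs, so this is `2 W(G)`. -/
noncomputable def totalDist (G : SimpleGraph V) : ℕ := ∑ u, ∑ v, G.dist u v

lemma add_one_le_card_filter_dist_le {v w : V} {i : ℕ} (hw : i < G.dist v w) :
    i + 1 ≤ #{x | G.dist v x ≤ i} := by
  have hvw : G.Reachable v w := Reachable.of_dist_ne_zero (by omega)
  obtain ⟨p, hp⟩ := hvw.exists_walk_length_eq_dist
  have hdist (j : ℕ) (hj : j ∈ range (i + 1)) : G.dist v (p.getVert j) = j :=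
    p.dist_getVert_of_length_eq_dist hp (by rw [mem_range] at hj; omega)
  rw [← card_range (i + 1)]
  refine card_le_card_of_injOn p.getVert (fun j hj => ?_) (fun j hj j' hj' h => ?_)
  · simp only [coe_filter, mem_univ, true_and, Set.mem_ofPred_eq, hdist j hj]
    rw [mem_coe, mem_range] at hj
    omega
  · rw [← hdist j hj, ← hdist j' hj', h]

lemma card_filter_dist_gt_le (v : V) (i : ℕ) :
    #{w | i < G.dist v w} ≤ Fintype.card V - (i + 1) := by
  obtain hempty | ⟨w, hw⟩ := (univ.filter fun w => i < G.dist v w).eq_empty_or_nonempty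
  · simp [hempty]
  · have hball := add_one_le_card_filter_dist_le (mem_filter.1 hw).2
    have hsplit := card_filter_add_card_filter_not (s := univ) fun x => G.dist v x ≤ i
    simp only [not_le, card_univ] at hsplit
    omega

lemma transmission_le_sum_range (v : V) :
    G.transmission v ≤ ∑ i ∈ range (Fintype.card V), i := by
  set n := Fintype.card V
  calc G.transmission v = ∑ i ∈ range n, #{w | i < G.dist v w} :=
        sum_eq_sum_range_card_filter_lt _ _ fun w _ => (dist_lt_card v w).le
    _ ≤ ∑ i ∈ range n, (n - 1 - i) :=
        sum_le_sum fun i _ => (card_filter_dist_gt_le v i).trans_eq (by omega)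
    _ = ∑ i ∈ range n, i := sum_range_reflect id n

lemma totalDist_le_totalDist_induce_compl_add [DecidableEq V] {v : V}
    (hv : (G.induce {v}ᶜ).Preconnected) :
    G.totalDist ≤ (G.induce {v}ᶜ).totalDist + 2 * G.transmission v := by
  have hsplit (f : V → ℕ) : ∑ u, f u = f v + ∑ u : ({v}ᶜ : Set V), f u :=
    Fintype.sum_eq_add_sum_subtype_ne f v
  have hcol : ∑ u : ({v}ᶜ : Set V), G.dist u v = G.transmission v := by
    rw [transmission, hsplit, dist_self, zero_add]
    exact sum_congr rfl fun u _ => dist_comm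
  have hrest : ∑ u : ({v}ᶜ : Set V), ∑ w : ({v}ᶜ : Set V), G.dist u w ≤
      (G.induce {v}ᶜ).totalDist :=
    sum_le_sum fun u _ => sum_le_sum fun w _ => (hv u w).dist_map_le (Embedding.induce _).toHom
  calc G.totalDist
      = G.transmission v + (∑ u : ({v}ᶜ : Set V), G.dist u v
          + ∑ u : ({v}ᶜ : Set V), ∑ w : ({v}ᶜ : Set V), G.dist u w) := by
        rw [totalDist, hsplit, transmission]
        simp_rw [hsplit fun w => G.dist _ w]
        rw [sum_add_distrib]
    _ ≤ _ := by omega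

end Fintype

theorem Connected.totalDist_le [Fintype V] (hG : G.Connected) :
    G.totalDist ≤ ∑ i ∈ range (Fintype.card V), ∑ j ∈ range (Fintype.card V), Nat.dist i j := by
  induction h : Fintype.card V generalizing V with
  | zero =>
    have := Fintype.card_eq_zero_iff.mp h
    simp [totalDist]
  | succ n ih =>
    classical
    rcases subsingleton_or_nontrivial V with _ | _
    · have hzero (u w : V) : G.dist u w = 0 := by rw [Subsingleton.elim u w, dist_self]
      simp [totalDist, hzero]
    obtain ⟨v, hv⟩ := hG.exists_connected_induce_compl_singleton_of_finite_nontrivial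
    have hcard : Fintype.card ({v}ᶜ : Set V) = n := by
      rw [Fintype.card_compl_set, h, Set.card_singleton, Nat.add_sub_cancel]
    have htrans := transmission_le_sum_range (G := G) v
    rw [h] at htrans
    calc G.totalDist ≤ (G.induce {v}ᶜ).totalDist + 2 * G.transmission v :=
          totalDist_le_totalDist_induce_compl_add hv.preconnected
      _ ≤ ∑ i ∈ range n, ∑ j ∈ range n, Nat.dist i j + 2 * ∑ i ∈ range (n + 1), i := by
          gcongr
          exact ih hv hcard
      _ = _ := (Nat.sum_range_sum_range_dist_succ n).symm

lemma Walk.natDist_le_length {f : V → ℕ} (hf : ∀ a b, G.Adj a b → Nat.dist (f a) (f b) ≤ 1)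
    {u v : V} (p : G.Walk u v) : Nat.dist (f u) (f v) ≤ p.length := by
  induction p with
  | nil => simp
  | @cons a b c hab q ih =>
    rw [length_cons]
    exact (Nat.dist.triangle_inequality _ (f b) _).trans (by linarith [hf a b hab])

lemma natDist_le_dist_pathGraph {k : ℕ} (u v : Fin k) :
    Nat.dist u v ≤ (pathGraph k).dist u v := by
  obtain _ | k := k
  · exact u.elim0
  obtain ⟨p, hp⟩ := (pathGraph_connected k).exists_walk_length_eq_dist u v
  refine hp ▸ p.natDist_le_length fun a b hab => ?_
  rw [pathGraph_adj] at hab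
  simp only [Nat.dist]
  omega

end SimpleGraph

/-- Among connected graphs on k vertices, the path graph maximizes the sum of
pairwise shortest-path distances. -/
theorem path_graph_maximizes_total_distance (k : ℕ) (G : SimpleGraph (Fin k))
    (hG : G.Connected) :
    ∑ u : Fin k, ∑ v : Fin k, G.dist u v ≤
      ∑ u : Fin k, ∑ v : Fin k, (SimpleGraph.pathGraph k).dist u v :=
  calc ∑ u : Fin k, ∑ v : Fin k, G.dist u v
      ≤ ∑ i ∈ range k, ∑ j ∈ range k, Nat.dist i j := by
        simpa only [Fintype.card_fin, SimpleGraph.totalDist] using hG.totalDist_le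
    _ = ∑ u : Fin k, ∑ v : Fin k, Nat.dist u v := by
        simp only [Fin.sum_univ_eq_sum_range (fun i => ∑ j ∈ range k, Nat.dist i j),
          Fin.sum_univ_eq_sum_range (Nat.dist _)]
    _ ≤ _ := sum_le_sum fun u _ => sum_le_sum fun v _ =>
        SimpleGraph.natDist_le_dist_pathGraph u v
end

section
/- Let ε̄ > 0, k ≥ 1, and for each j ∈ {1,…,k} suppose a sequence of real numbers a₁,…,a_k in [0,1] satisfies: for every ζ ∈ {1,…,k}, (1−ε̄)/(k−ζ+1) · (1 − Σ_{j<ζ} a_j) ≤ a_ζ ≤ (1+ε̄)/(k−ζ+1) · (1 − Σ_{j<ζ} a_j), where additionally Σ_{j<ζ} a_j is bounded using previous steps. Then for every j ∈ {1,…,k}: (1 − (2^j − 1)ε̄)/k ≤ a_j ≤ (1 + (2^j − 1)ε̄)/k, provided ε̄ ≤ 2^{−k}. -/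
/-!
Let `ρₙ = (1 - ∑_{j ≤ n} a_j) / (k - n)` be the remaining mass per remaining iteration, so
`ρ₀ = 1/k`. The hypothesis says `|a_{n+1} - ρₙ| ≤ ε ρₙ`, and removing `a_{n+1}` gives
`ρ_{n+1} = ρₙ - (a_{n+1} - ρₙ) / (k - n - 1)`. If `|ρₙ - 1/k| ≤ eₙ`, then
`|a_{n+1} - ρₙ| ≤ ε (1/k + eₙ) ≤ eₙ + ε/k`, so both `|a_{n+1} - 1/k|` and `|ρ_{n+1} - 1/k|`
are at most `2 eₙ + ε/k`. The error recursion `e_{n+1} = 2 eₙ + ε/k`, `e₀ = 0`, is solved by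
`eₙ = (2ⁿ - 1) ε/k`.
-/

open Finset

lemma abs_sub_le_mul_of_mul_le_of_le_mul {ε ρ a : ℝ} (hlo : (1 - ε) * ρ ≤ a)
    (hhi : a ≤ (1 + ε) * ρ) : |a - ρ| ≤ ε * ρ :=
  abs_sub_le_iff.mpr ⟨by linarith, by linarith⟩

lemma abs_sub_le_add_of_abs_sub_le_mul {ε ρ t e a : ℝ} (hε₀ : 0 ≤ ε) (hε₁ : ε ≤ 1)
    (hρ : |ρ - t| ≤ e) (ha : |a - ρ| ≤ ε * ρ) : |a - ρ| ≤ e + ε * t := by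
  have he : 0 ≤ e := (abs_nonneg _).trans hρ
  have hρt : ρ ≤ t + e := by linarith [le_abs_self (ρ - t)]
  calc |a - ρ| ≤ ε * ρ := ha
    _ ≤ ε * (t + e) := by gcongr
    _ ≤ e + ε * t := by nlinarith

lemma two_pow_sub_one_mul_succ (n : ℕ) (ε t : ℝ) :
    (2 ^ (n + 1) - 1) * ε * t = 2 * ((2 ^ n - 1) * ε * t) + ε * t := by
  ring

noncomputable def remainingShare (k : ℕ) (a : ℕ → ℝ) (n : ℕ) : ℝ :=
  (1 - ∑ j ∈ Icc 1 n, a j) / (k - n)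

section remainingShare

variable {k : ℕ} {a : ℕ → ℝ}

@[simp]
lemma remainingShare_zero : remainingShare k a 0 = 1 / k := by
  simp [remainingShare]

lemma remainingShare_succ {n : ℕ} (hn : n + 1 < k) :
    remainingShare k a (n + 1) =
      remainingShare k a n - (a (n + 1) - remainingShare k a n) / ((k : ℝ) - (n + 1)) := by
  have hkn : (n : ℝ) + 1 < k := by exact_mod_cast hn
  have h₁ : (k : ℝ) - n ≠ 0 := by linarith
  have h₂ : (k : ℝ) - (n + 1) ≠ 0 := by linarith
  simp only [remainingShare, sum_Icc_succ_top (Nat.le_add_left 1 n), Nat.cast_add, Nat.cast_one]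
  field_simp
  ring

theorem abs_remainingShare_sub_le {ε : ℝ} (hε₀ : 0 ≤ ε) (hε₁ : ε ≤ 1)
    (hshare : ∀ n < k, |a (n + 1) - remainingShare k a n| ≤ ε * remainingShare k a n) :
    ∀ n < k, |remainingShare k a n - 1 / k| ≤ (2 ^ n - 1) * ε * (1 / k) := by
  intro n
  induction n with
  | zero => simp
  | succ n ih =>
    intro hn
    set ρ := remainingShare k a n
    have hρ := ih (by omega)
    have ha := abs_sub_le_add_of_abs_sub_le_mul hε₀ hε₁ hρ (hshare n (by omega))
    have hd : (1 : ℝ) ≤ (k : ℝ) - (n + 1) := by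
      have : (n : ℝ) + 2 ≤ k := by exact_mod_cast hn
      linarith
    rw [remainingShare_succ hn, sub_right_comm]
    calc _ ≤ |ρ - 1 / k| + |(a (n + 1) - ρ) / ((k : ℝ) - (n + 1))| := abs_sub _ _
      _ ≤ |ρ - 1 / k| + |a (n + 1) - ρ| := by
          rw [abs_div, abs_of_pos (by linarith : (0 : ℝ) < (k : ℝ) - (n + 1))]
          gcongr
          exact div_le_self (abs_nonneg _) hd
      _ ≤ (2 ^ (n + 1) - 1) * ε * (1 / k) := by
          rw [two_pow_sub_one_mul_succ]
          linarith

theorem abs_sub_one_div_le {ε : ℝ} (hε₀ : 0 ≤ ε) (hε₁ : ε ≤ 1)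
    (hshare : ∀ n < k, |a (n + 1) - remainingShare k a n| ≤ ε * remainingShare k a n)
    {n : ℕ} (hn : n < k) : |a (n + 1) - 1 / k| ≤ (2 ^ (n + 1) - 1) * ε * (1 / k) := by
  have hρ := abs_remainingShare_sub_le hε₀ hε₁ hshare n hn
  have ha := abs_sub_le_add_of_abs_sub_le_mul hε₀ hε₁ hρ (hshare n hn)
  calc _ ≤ |a (n + 1) - remainingShare k a n| + |remainingShare k a n - 1 / k| :=
        abs_sub_le _ _ _
    _ ≤ _ := by rw [two_pow_sub_one_mul_succ]; linarith

end remainingShare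

theorem error_propagation_general (k : ℕ) (ε : ℝ) (hε : 0 < ε)
    (hεk : ε * 2 ^ k ≤ 1) (a : ℕ → ℝ)
    (hrec : ∀ ζ ∈ Finset.Icc 1 k,
      (1 - ε) / ((k : ℝ) - ζ + 1) * (1 - ∑ j ∈ Finset.Icc 1 (ζ - 1), a j) ≤ a ζ ∧
      a ζ ≤ (1 + ε) / ((k : ℝ) - ζ + 1) * (1 - ∑ j ∈ Finset.Icc 1 (ζ - 1), a j)) :
    ∀ j ∈ Finset.Icc 1 k,
      (1 - (2 ^ j - 1) * ε) / k ≤ a j ∧ a j ≤ (1 + (2 ^ j - 1) * ε) / k := by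
  have hε₁ : ε ≤ 1 := (le_mul_of_one_le_right hε.le (one_le_pow₀ one_le_two)).trans hεk
  have hshare : ∀ n < k, |a (n + 1) - remainingShare k a n| ≤ ε * remainingShare k a n := by
    intro n hn
    obtain ⟨hlo, hhi⟩ := hrec (n + 1) (mem_Icc.mpr ⟨by omega, hn⟩)
    have hd : (k : ℝ) - ((n + 1 : ℕ) : ℝ) + 1 = k - n := by push_cast; ring
    rw [Nat.add_sub_cancel, hd, div_mul_eq_mul_div, ← mul_div_assoc'] at hlo hhi
    exact abs_sub_le_mul_of_mul_le_of_le_mul hlo hhi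
  intro j hj
  obtain ⟨n, rfl⟩ : ∃ n, j = n + 1 := ⟨j - 1, by grind⟩
  have hdev := abs_sub_le_iff.mp (abs_sub_one_div_le hε.le hε₁ hshare (n := n) (by grind))
  constructor
  · calc _ = 1 / (k : ℝ) - (2 ^ (n + 1) - 1) * ε * (1 / k) := by ring
      _ ≤ _ := by linarith
  · calc _ ≤ 1 / (k : ℝ) + (2 ^ (n + 1) - 1) * ε * (1 / k) := by linarith
      _ = _ := by ring

/-- Geometric error propagation: if each aζ is within a (1±ε̄)/(k−ζ+1) factor of
the remaining mass 1 − Σ_{j<ζ} a_j, then a_j is within (1±(2^j−1)ε̄)/k. -/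
theorem error_propagation (k : ℕ) (hk : 1 ≤ k) (ε : ℝ) (hε : 0 < ε)
    (hεk : ε * 2 ^ k ≤ 1) (a : ℕ → ℝ)
    (h01 : ∀ j ∈ Finset.Icc 1 k, 0 ≤ a j ∧ a j ≤ 1)
    (hrec : ∀ ζ ∈ Finset.Icc 1 k,
      (1 - ε) / ((k : ℝ) - ζ + 1) * (1 - ∑ j ∈ Finset.Icc 1 (ζ - 1), a j) ≤ a ζ ∧
      a ζ ≤ (1 + ε) / ((k : ℝ) - ζ + 1) * (1 - ∑ j ∈ Finset.Icc 1 (ζ - 1), a j)) :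
    ∀ j ∈ Finset.Icc 1 k,
      (1 - (2 ^ j - 1) * ε) / k ≤ a j ∧ a j ≤ (1 + (2 ^ j - 1) * ε) / k :=
  error_propagation_general k ε hε hεk a hrec
end

section
/- With ε̄ = ε/2^k for ε ∈ (0,1), if for each j ∈ {1,…,k} the fraction a_j satisfies the recursive bounds (1−ε̄)/(k−j+1)·(1−Σ_{i<j} a_i) ≤ a_j ≤ (1+ε̄)/(k−j+1)·(1−Σ_{i<j} a_i), then for every j, (1−ε)/k < a_j < (1+ε)/k. -/
/-!
Write `s_j` for the fair share `(1 - ∑_{i<j} a_i) / (k - j + 1)` of what remains at iteration `j`.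
The hypothesis says `a_j` is within relative error `ε̄` of `s_j`, and removing `a_j` from
`k - j + 1` equal shares leaves `k - j` shares that are again within relative error `ε̄` of `s_j`.
Relative errors compose as `(1 + δ)(1 + η) - 1`, so `s_j` is within `(1 + ε̄)^(j-1) - 1` of `1/k`
and `a_j` within `(1 + ε̄)^j - 1 ≤ (2^j - 1) ε̄ < 2^k ε̄ = ε`.
-/

open Finset

def RelClose (δ x y : ℝ) : Prop := |x - y| ≤ δ * y

theorem relClose_iff {δ x y : ℝ} : RelClose δ x y ↔ (1 - δ) * y ≤ x ∧ x ≤ (1 + δ) * y := by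
  rw [RelClose, abs_sub_le_iff]
  constructor <;> rintro ⟨h₁, h₂⟩ <;> exact ⟨by linarith, by linarith⟩

namespace RelClose

variable {δ η x y z : ℝ}

theorem bounds_of_lt (h : RelClose δ x y) (hδ : δ < η) (hy : 0 < y) :
    (1 - η) * y < x ∧ x < (1 + η) * y := by
  obtain ⟨hlo, hhi⟩ := relClose_iff.mp h
  constructor <;> nlinarith

theorem trans (hxy : RelClose δ x y) (hyz : RelClose η y z) (hδ : 0 ≤ δ) :
    RelClose ((1 + δ) * (1 + η) - 1) x z := by
  have hy : y ≤ (1 + η) * z := (relClose_iff.mp hyz).2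
  calc |x - z| ≤ |x - y| + |y - z| := abs_sub_le x y z
    _ ≤ δ * y + η * z := add_le_add hxy hyz
    _ ≤ δ * ((1 + η) * z) + η * z := by gcongr
    _ = ((1 + δ) * (1 + η) - 1) * z := by ring

/-- Taking `x ≈ y` out of `D + 1` shares of size `y` leaves `D ≥ 1` shares of size `≈ y`. -/
theorem share_of_remainder {D : ℝ} (h : RelClose δ x y) (hD : 1 ≤ D) :
    RelClose δ (((D + 1) * y - x) / D) y := by
  have hδy : 0 ≤ δ * y := (abs_nonneg _).trans h
  have hsplit : ((D + 1) * y - x) / D - y = -((x - y) / D) := by field_simp; ring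
  rw [RelClose, hsplit, abs_neg, abs_div, abs_of_pos (by linarith : (0 : ℝ) < D)]
  calc |x - y| / D ≤ |x - y| := div_le_self (abs_nonneg _) hD
    _ ≤ δ * y := h

end RelClose

theorem one_add_pow_sub_one_le {e : ℝ} (he₀ : 0 ≤ e) (he₁ : e ≤ 1) (n : ℕ) :
    (1 + e) ^ n - 1 ≤ (2 ^ n - 1) * e := by
  induction n with
  | zero => simp
  | succ n ih =>
    have hpow : 1 ≤ (1 + e) ^ n := one_le_pow₀ (by linarith)
    calc (1 + e) ^ (n + 1) - 1 = (1 + e) * ((1 + e) ^ n - 1) + e := by ring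
      _ ≤ 2 * ((2 ^ n - 1) * e) + e := by gcongr; linarith
      _ = (2 ^ (n + 1) - 1) * e := by ring

noncomputable def fairShare (k : ℕ) (a : ℕ → ℝ) (j : ℕ) : ℝ :=
  (1 - ∑ i ∈ Icc 1 (j - 1), a i) / ((k : ℝ) - j + 1)

section FairShare

variable {k : ℕ} {a : ℕ → ℝ}

@[simp]
theorem fairShare_one : fairShare k a 1 = 1 / k := by
  simp [fairShare]

theorem fairShare_succ {j : ℕ} (hj : 1 ≤ j) (hjk : j < k) :
    fairShare k a (j + 1) = (((k : ℝ) - j + 1) * fairShare k a j - a j) / ((k : ℝ) - j) := by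
  have hjk' : (j : ℝ) < k := by exact_mod_cast hjk
  obtain ⟨i, rfl⟩ := Nat.exists_eq_add_of_le' hj
  rw [fairShare, fairShare, mul_div_cancel₀ _ (by linarith), Nat.add_sub_cancel,
    Nat.add_sub_cancel, sum_Icc_succ_top (by omega)]
  push_cast
  ring_nf

theorem relClose_fairShare {e : ℝ} (he : 0 ≤ e)
    (hshare : ∀ j ∈ Icc 1 k, RelClose e (a j) (fairShare k a j)) {j : ℕ} (hj : 1 ≤ j)
    (hjk : j ≤ k) : RelClose ((1 + e) ^ (j - 1) - 1) (fairShare k a j) (1 / k) := by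
  induction j, hj using Nat.le_induction with
  | base => simp [RelClose]
  | succ j hj ih =>
    have hjk' : (1 : ℝ) ≤ (k : ℝ) - j := by
      have : (j : ℝ) + 1 ≤ k := by exact_mod_cast hjk
      linarith
    have hstep := ((hshare j (mem_Icc.mpr ⟨hj, by omega⟩)).share_of_remainder hjk').trans
      (ih (by omega)) he
    rw [fairShare_succ hj (by omega), Nat.add_sub_cancel]
    simpa only [add_sub_cancel, mul_pow_sub_one (by omega : j ≠ 0)] using hstep

end FairShare

theorem uniform_fairness_guarantee_general (k : ℕ) (ε : ℝ)
    (hε0 : 0 < ε) (hε1 : ε < 1) (a : ℕ → ℝ)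
    (hrec : ∀ j ∈ Finset.Icc 1 k,
      (1 - ε / 2 ^ k) / ((k : ℝ) - j + 1) * (1 - ∑ i ∈ Finset.Icc 1 (j - 1), a i) ≤ a j ∧
      a j ≤ (1 + ε / 2 ^ k) / ((k : ℝ) - j + 1) * (1 - ∑ i ∈ Finset.Icc 1 (j - 1), a i)) :
    ∀ j ∈ Finset.Icc 1 k, (1 - ε) / k < a j ∧ a j < (1 + ε) / k := by
  set e := ε / 2 ^ k with he
  have he₀ : 0 < e := by positivity
  have h2k : (1 : ℝ) ≤ 2 ^ k := one_le_pow₀ one_le_two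
  have he₁ : e ≤ 1 := div_le_one_of_le₀ (by linarith) (by positivity)
  have hshare : ∀ j ∈ Icc 1 k, RelClose e (a j) (fairShare k a j) := fun j hj => by
    simpa only [relClose_iff, fairShare, div_mul_eq_mul_div, mul_div_assoc]
      using hrec j hj
  intro j hj
  obtain ⟨hj₁, hjk⟩ := mem_Icc.mp hj
  have hclose : RelClose ((1 + e) ^ j - 1) (a j) (1 / k) := by
    simpa only [add_sub_cancel, mul_pow_sub_one (by omega : j ≠ 0)] using
      (hshare j hj).trans (relClose_fairShare he₀.le hshare hj₁ hjk) he₀.le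
  have herr : (1 + e) ^ j - 1 < ε :=
    calc (1 + e) ^ j - 1 ≤ (2 ^ j - 1) * e := one_add_pow_sub_one_le he₀.le he₁ j
      _ < 2 ^ k * e := by
          gcongr
          linarith [pow_le_pow_right₀ (one_le_two : (1 : ℝ) ≤ 2) hjk]
      _ = ε := by rw [he]; field_simp
  have hk : (0 : ℝ) < 1 / k := one_div_pos.mpr (by exact_mod_cast hj₁.trans hjk)
  simpa only [mul_one_div] using hclose.bounds_of_lt herr hk

/-- With ε̄ = ε/2^k, the recursive sample bounds imply the uniform guarantee
(1−ε)/k < a_j < (1+ε)/k for every iteration j. -/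
theorem uniform_fairness_guarantee (k : ℕ) (hk : 1 ≤ k) (ε : ℝ)
    (hε0 : 0 < ε) (hε1 : ε < 1) (a : ℕ → ℝ)
    (h01 : ∀ j ∈ Finset.Icc 1 k, 0 ≤ a j ∧ a j ≤ 1)
    (hrec : ∀ j ∈ Finset.Icc 1 k,
      (1 - ε / 2 ^ k) / ((k : ℝ) - j + 1) * (1 - ∑ i ∈ Finset.Icc 1 (j - 1), a i) ≤ a j ∧
      a j ≤ (1 + ε / 2 ^ k) / ((k : ℝ) - j + 1) * (1 - ∑ i ∈ Finset.Icc 1 (j - 1), a i)) :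
    ∀ j ∈ Finset.Icc 1 k, (1 - ε) / k < a j ∧ a j < (1 + ε) / k :=
  uniform_fairness_guarantee_general k ε hε0 hε1 a hrec
end

section
/- A binary necklace with m beads (m₁ of color 1 and m₂ of color 2, with k | m₁ and k | m₂) always admits a fair division among k agents using at most 2(k−1) cuts: there exists a partition of positions {1,…,m} into at most 2k−1 contiguous intervals and an assignment of intervals to agents such that each agent receives exactly m₁/k beads of color 1 and m₂/k of color 2. -/
/-!
Induction on the number of agents. For `k + 1` agents and a necklace of length `(k + 1) * L`
with `(k + 1) * q₀` beads of colour 0, the number of colour-0 beads in the window `[t, t + L)`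
moves by at most one when `t` increases by one, and its values at `t = 0, L, …, k * L` average
`q₀`; by the discrete intermediate value theorem some window holds exactly `q₀` beads of
colour 0, hence `L - q₀ = q₁` of colour 1. That window goes to the last agent; the rest, glued
together, is a necklace for `k` agents, and putting the window back costs at most two cuts.
-/

open Finset Nat

theorem exists_mem_Icc_eq_of_map_succ_le_add_one {f : ℕ → ℤ} (hf : ∀ n, f (n + 1) ≤ f n + 1)
    {a b : ℕ} {v : ℤ} (hab : a ≤ b) (ha : f a ≤ v) (hb : v ≤ f b) :
    ∃ t ∈ Set.Icc a b, f t = v := by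
  induction b, hab using Nat.le_induction with
  | base => exact ⟨a, Set.left_mem_Icc.2 le_rfl, le_antisymm ha hb⟩
  | succ b hab ih =>
    by_cases hvb : v ≤ f b
    · obtain ⟨t, ht, hft⟩ := ih hvb
      exact ⟨t, ⟨ht.1, ht.2.trans b.le_succ⟩, hft⟩
    · exact ⟨b + 1, ⟨by omega, le_rfl⟩, by linarith [hf b]⟩

theorem exists_mem_uIcc_eq_of_abs_map_succ_sub_le_one {f : ℕ → ℤ}
    (hf : ∀ n, |f (n + 1) - f n| ≤ 1) {a b : ℕ} {v : ℤ} (ha : f a ≤ v) (hb : v ≤ f b) :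
    ∃ t ∈ Set.uIcc a b, f t = v := by
  rcases le_total a b with hab | hba
  · obtain ⟨t, ht, hft⟩ := exists_mem_Icc_eq_of_map_succ_le_add_one
      (fun n => by linarith [(abs_le.1 (hf n)).2]) hab ha hb
    exact ⟨t, Set.Icc_subset_uIcc ht, hft⟩
  · obtain ⟨t, ht, hft⟩ := exists_mem_Icc_eq_of_map_succ_le_add_one (f := fun n => -f n)
      (fun n => by linarith [(abs_le.1 (hf n)).1]) hba (neg_le_neg hb) (neg_le_neg ha)
    exact ⟨t, Set.Icc_subset_uIcc' ht, neg_inj.1 hft⟩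

theorem Nat.exists_count_add_eq_count_add (p : ℕ → Prop) [DecidablePred p] {k L q : ℕ}
    (h : count p ((k + 1) * L) = (k + 1) * q) :
    ∃ t ≤ k * L, count p (t + L) = count p t + q := by
  set w : ℕ → ℤ := fun t => count p (t + L) - count p t with hw
  have hstep : ∀ t, |w (t + 1) - w t| ≤ 1 := by
    intro t
    simp only [hw, show t + 1 + L = t + L + 1 by ring, count_succ]
    split_ifs <;> norm_num
  have hsum : ∑ j ∈ range (k + 1), w (j * L) = ∑ _j ∈ range (k + 1), (q : ℤ) := by
    simp only [hw, ← Nat.succ_mul, sum_range_sub (fun j => (count p (j * L) : ℤ)), h]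
    simp
  have hne : (range (k + 1)).Nonempty := nonempty_range_add_one
  obtain ⟨j₁, hj₁, hlow⟩ := exists_le_of_sum_le hne hsum.le
  obtain ⟨j₂, hj₂, hhigh⟩ := exists_le_of_sum_le hne hsum.ge
  obtain ⟨t, ht, hwt⟩ := exists_mem_uIcc_eq_of_abs_map_succ_sub_le_one hstep hlow hhigh
  have hj₁k : j₁ * L ≤ k * L := Nat.mul_le_mul_right L (by simpa [Nat.lt_succ_iff] using hj₁)
  have hj₂k : j₂ * L ≤ k * L := Nat.mul_le_mul_right L (by simpa [Nat.lt_succ_iff] using hj₂)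
  refine ⟨t, ?_, by simp only [hw] at hwt; omega⟩
  rcases Set.mem_uIcc.1 ht with h | h <;> omega

theorem Nat.count_congr {p q : ℕ → Prop} [DecidablePred p] [DecidablePred q] {n : ℕ}
    (h : ∀ j < n, p j ↔ q j) : count p n = count q n :=
  le_antisymm (count_mono_left fun j hj => (h j hj).1) (count_mono_left fun j hj => (h j hj).2)

namespace Necklace

/-- `skipBlock t L` enumerates `ℕ \ [t, t + L)` increasingly, so `S ∘ skipBlock t L` is the
necklace `S` with the block `[t, t + L)` cut out and the two ends glued. -/
def skipBlock (t L j : ℕ) : ℕ := if j < t then j else j + L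

def insertBlock {α : Type*} (g : ℕ → α) (t L : ℕ) (b : α) (j : ℕ) : α :=
  if j < t then g j else if j < t + L then b else g (j - L)

def numCuts {α : Type*} [DecidableEq α] (f : ℕ → α) (n : ℕ) : ℕ :=
  #{j ∈ range (n - 1) | f j ≠ f (j + 1)}

variable {α : Type*}

@[simp]
theorem insertBlock_skipBlock (g : ℕ → α) (t L : ℕ) (b : α) (j : ℕ) :
    insertBlock g t L b (skipBlock t L j) = g j := by
  unfold insertBlock skipBlock
  split_ifs <;> first | rfl | omega | simp

theorem insertBlock_add (g : ℕ → α) (t L : ℕ) (b : α) {j : ℕ} (hj : j < L) :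
    insertBlock g t L b (t + j) = b := by
  simp [insertBlock, hj]

theorem count_comp_skipBlock_add_count (p : ℕ → Prop) [DecidablePred p] (t L r : ℕ) :
    count (fun j => p (skipBlock t L j)) (t + r) + count (fun j => p (t + j)) L
      = count p (t + L + r) := by
  have hlow : count (fun j => p (skipBlock t L j)) t = count p t :=
    count_congr fun j hj => by rw [skipBlock, if_pos hj]
  have hhigh : ∀ j, skipBlock t L (t + j) = t + (L + j) := fun j => by
    simp only [skipBlock, if_neg (Nat.not_lt.2 (Nat.le_add_right t j))]
    ring
  rw [count_add, hlow, add_assoc t L r, count_add p t, count_add _ L r]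
  simp only [hhigh]
  ring

theorem numCuts_comp_of_injective {β : Type*} [DecidableEq α] [DecidableEq β] {e : α → β}
    (he : Function.Injective e) (f : ℕ → α) (n : ℕ) : numCuts (e ∘ f) n = numCuts f n := by
  simp [numCuts, he.ne_iff]

theorem numCuts_insertBlock_le [DecidableEq α] (g : ℕ → α) (t L r : ℕ) (b : α) :
    numCuts (insertBlock g t L b) (t + L + r) ≤ numCuts g (t + r) + 2 := by
  have hsub : {j ∈ range (t + L + r - 1) | insertBlock g t L b j ≠ insertBlock g t L b (j + 1)}
      ⊆ {j ∈ range (t + r - 1) | g j ≠ g (j + 1)}.image (skipBlock t L) ∪ {t - 1, t + L - 1} := by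
    intro j hj
    simp only [mem_filter, mem_range] at hj
    simp only [mem_union, mem_image, mem_filter, mem_range, mem_insert, mem_singleton]
    by_cases hlt : j + 1 < t
    · refine Or.inl ⟨j, ⟨by omega, ?_⟩, by simp [skipBlock, show j < t by omega]⟩
      simpa [insertBlock, hlt, show j < t by omega] using hj.2
    by_cases hge : t + L ≤ j
    · refine Or.inl ⟨j - L, ⟨by omega, ?_⟩, by rw [skipBlock, if_neg (by omega)]; omega⟩
      have := hj.2
      simp only [insertBlock, if_neg (show ¬ j < t by omega), if_neg (show ¬ j < t + L by omega),
        if_neg (show ¬ j + 1 < t by omega), if_neg (show ¬ j + 1 < t + L by omega)] at this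
      rwa [show j + 1 - L = j - L + 1 by omega] at this
    refine Or.inr (by_contra fun hne => hj.2 ?_)
    rw [show j = t + (j - t) by omega, insertBlock_add g t L b (by omega),
      show t + (j - t) + 1 = t + (j + 1 - t) by omega, insertBlock_add g t L b (by omega)]
  calc numCuts (insertBlock g t L b) (t + L + r)
      ≤ #({j ∈ range (t + r - 1) | g j ≠ g (j + 1)}.image (skipBlock t L)) + #{t - 1, t + L - 1} :=
        (card_le_card hsub).trans (card_union_le _ _)
    _ ≤ numCuts g (t + r) + 2 := Nat.add_le_add card_image_le card_le_two

theorem count_insertBlock_eq {k : ℕ} {S : ℕ → Fin 2} {owner : ℕ → Fin (k + 1)} {t L r : ℕ}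
    {q : Fin 2 → ℕ}
    (hfair : ∀ a i, count (fun j => owner j = a ∧ S (skipBlock t L j) = i) (t + r) = q i)
    (hblock : ∀ i, count (fun j => S (t + j) = i) L = q i) (a : Fin (k + 2)) (i : Fin 2) :
    count (fun j => insertBlock (Fin.castSucc ∘ owner) t L (Fin.last _) j = a ∧ S j = i)
      (t + L + r) = q i := by
  rw [← count_comp_skipBlock_add_count,
    count_congr (n := L) (q := fun j => Fin.last _ = a ∧ S (t + j) = i)
      fun j hj => by rw [insertBlock_add _ _ _ _ hj]]
  simp only [insertBlock_skipBlock, Function.comp_apply]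
  rcases Fin.eq_castSucc_or_eq_last a with ⟨b, rfl⟩ | rfl
  · simp [Fin.castSucc_inj, hfair b i, (Fin.castSucc_lt_last b).ne']
  · simp [(Fin.castSucc_lt_last _).ne, hblock i]

theorem count_eq_zero_add_count_eq_one (S : ℕ → Fin 2) (n : ℕ) :
    count (S · = 0) n + count (S · = 1) n = n := by
  induction n with
  | zero => simp
  | succ n ih =>
    simp only [count_succ]
    rcases Fin.exists_fin_two.1 ⟨S n, rfl⟩ with h | h <;> simp [h] <;> omega

theorem exists_block_count_eq (S : ℕ → Fin 2) {k : ℕ} {q : Fin 2 → ℕ}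
    (hq : ∀ i, count (S · = i) ((k + 1) * (q 0 + q 1)) = (k + 1) * q i) :
    ∃ t ≤ k * (q 0 + q 1), ∀ i, count (fun j => S (t + j) = i) (q 0 + q 1) = q i := by
  obtain ⟨t, ht, hwin⟩ := exists_count_add_eq_count_add (S · = 0) (hq 0)
  have h₀ : count (fun j => S (t + j) = 0) (q 0 + q 1) = q 0 := by
    rw [count_add] at hwin
    omega
  have h₁ := count_eq_zero_add_count_eq_one (fun j => S (t + j)) (q 0 + q 1)
  refine ⟨t, ht, fun i => ?_⟩
  fin_cases i
  · exact h₀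
  · simp only [Fin.mk_one, Fin.isValue]
    omega

theorem exists_fair_owner (k m : ℕ) (S : ℕ → Fin 2) (q : Fin 2 → ℕ)
    (hq : ∀ i, count (S · = i) m = (k + 1) * q i) :
    ∃ owner : ℕ → Fin (k + 1), numCuts owner m ≤ 2 * k ∧
      ∀ a i, count (fun j => owner j = a ∧ S j = i) m = q i := by
  induction k generalizing m S with
  | zero =>
    refine ⟨fun _ => 0, by simp [numCuts], fun a i => ?_⟩
    simp [Fin.eq_zero a, hq]
  | succ k ih =>
    set L := q 0 + q 1
    have hm : m = (k + 2) * L := by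
      rw [← count_eq_zero_add_count_eq_one S m, hq, hq, mul_add]
    subst hm
    obtain ⟨t, ht, hblock⟩ := exists_block_count_eq S hq
    obtain ⟨r, hr⟩ : ∃ r, (k + 1) * L = t + r := ⟨_, (Nat.add_sub_cancel' ht).symm⟩
    have hsplit : (k + 2) * L = t + L + r := by rw [add_right_comm, ← hr]; ring
    have hrest : ∀ i, count (fun j => S (skipBlock t L j) = i) (t + r) = (k + 1) * q i := by
      intro i
      have h := count_comp_skipBlock_add_count (S · = i) t L r
      rw [← hsplit, hq, hblock, add_mul] at h
      omega
    obtain ⟨owner, hcuts, hfair⟩ := ih (t + r) (S ∘ skipBlock t L) hrest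
    refine ⟨insertBlock (Fin.castSucc ∘ owner) t L (Fin.last _), ?_, ?_⟩
    · rw [hsplit]
      calc numCuts (insertBlock (Fin.castSucc ∘ owner) t L (Fin.last _)) (t + L + r)
          ≤ numCuts (Fin.castSucc ∘ owner) (t + r) + 2 := numCuts_insertBlock_le _ _ _ _ _
        _ ≤ 2 * (k + 1) := by rw [numCuts_comp_of_injective (Fin.castSucc_injective _)]; omega
    · rw [hsplit]
      exact count_insertBlock_eq hfair hblock

end Necklace

/-- Two-color necklace splitting: a binary necklace whose color counts are each
divisible by k admits a fair division among k agents with at most 2(k−1) cuts. -/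
theorem two_color_necklace_splitting (m k : ℕ) (hk : 0 < k) (S : ℕ → Fin 2)
    (hdvd : ∀ i : Fin 2, k ∣ ((Finset.range m).filter (fun j => S j = i)).card) :
    ∃ owner : ℕ → Fin k,
      ((Finset.range (m - 1)).filter (fun j => owner j ≠ owner (j + 1))).card
        ≤ 2 * (k - 1) ∧
      ∀ (a : Fin k) (i : Fin 2),
        ((Finset.range m).filter (fun j => owner j = a ∧ S j = i)).card
          = ((Finset.range m).filter (fun j => S j = i)).card / k := by
  obtain ⟨k, rfl⟩ : ∃ k', k = k' + 1 := ⟨k - 1, by omega⟩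
  choose q hq using hdvd
  simp only [← count_eq_card_filter_range] at hq
  obtain ⟨owner, hcuts, hfair⟩ := Necklace.exists_fair_owner k m S q hq
  refine ⟨owner, hcuts, fun a i => ?_⟩
  rw [← count_eq_card_filter_range, ← count_eq_card_filter_range, hfair, hq,
    Nat.mul_div_cancel_left _ k.succ_pos]
end

section
/- Suppose a binary necklace of length m (with k | m₁ and k | m₂) is fairly divided among k agents with at most 2(k−1) cuts via the greedy offline algorithm, and two adjacent beads of different colors belonging to two different agents are swapped. Then there exists a fair division of the modified necklace among the k agents with at most 2(k−1) cuts that agrees with the original division on all beads not belonging to those two agents. -/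
/-!
Only the beads of the agents `A` and `B` owning the swapped positions are redistributed. Read in
order, their beads contain exactly `2 (mᵢ / k)` beads of each colour `i`. A window of half of them
sliding along changes its colour-`0` count by at most one per step, and the first and last windows
are complementary, so some window holds exactly `m₀ / k` beads of colour `0`. Giving `A` the beads
of that window, which are those of `A ∪ B` in an interval `[a, b)` of the necklace, and `B` the
rest, is fair.

Only cuts between two beads of `A ∪ B` change: there was at least one (at the swap) and there are
at most two (at `a` and `b`). So the number of cuts can only grow when `A` and `B` were adjacent
exactly once, and then the greedy structure supplies the slack. In the greedy order, the agent of
least rank occupies one block; deleting it removes one agent and at most two cuts, and exactly two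
only when its two neighbours coincide, in which case the number of `A`–`B` adjacencies keeps its
parity. By induction, `d` agents make at most `2d - 2` cuts, and at most `2d - 3` when `A` and `B`
are adjacent exactly once.
-/

open Finset

/-- `owner` has the structure of an allocation produced by the greedy offline
algorithm (up to order of interval selection): there is an order of the agents
such that each agent's beads form a contiguous interval in the subsequence
remaining after removing the beads of earlier agents. -/
def GreedyStructure (k : ℕ) (owner : ℕ → Fin k) : Prop :=
  ∃ ord : Fin k → Fin k, Function.Bijective ord ∧
    ∀ (t : Fin k) (p q r : ℕ), p < r → r < q →
      owner p = ord t → owner q = ord t →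
      owner r = ord t ∨ ∃ s : Fin k, s < t ∧ owner r = ord s

theorem exists_eq_zero_of_abs_sub_le_one (f : ℕ → ℤ) (hf : ∀ i, |f (i + 1) - f i| ≤ 1) {t : ℕ}
    (h0 : f 0 ≤ 0) (ht : 0 ≤ f t) : ∃ l ≤ t, f l = 0 := by
  induction t with
  | zero => exact ⟨0, le_rfl, le_antisymm h0 ht⟩
  | succ t ih =>
    by_cases h : 0 ≤ f t
    · obtain ⟨l, hl, hfl⟩ := ih h
      exact ⟨l, hl.trans t.le_succ, hfl⟩
    · have := abs_le.1 (hf t)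
      exact ⟨t + 1, le_rfl, by omega⟩

theorem exists_card_filter_Ico_add_eq_half (Q : ℕ → Prop) [DecidablePred Q] {t z : ℕ}
    (h : #{x ∈ range (2 * t) | Q x} = 2 * z) : ∃ l ≤ t, #{x ∈ Ico l (l + t) | Q x} = z := by
  let g : ℕ → ℤ := fun l => #{x ∈ Ico l (l + t) | Q x} - z
  have hstep (l : ℕ) : |g (l + 1) - g l| ≤ 1 := by
    have hshift : #{x ∈ Ico l (l + t) | Q x} + (if Q (l + t) then 1 else 0) =
        (if Q l then 1 else 0) + #{x ∈ Ico (l + 1) (l + 1 + t) | Q x} := by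
      rw [card_filter, card_filter, ← sum_Ico_succ_top (by omega), Nat.add_right_comm,
        ← sum_eq_sum_Ico_succ_bot (by omega) (fun k => if Q k then 1 else 0)]
    simp only [g, abs_le]
    split_ifs at hshift <;> omega
  have hsum : g 0 + g t = 0 := by
    have : #{x ∈ Ico 0 t | Q x} + #{x ∈ Ico t (t + t) | Q x} = #{x ∈ range (2 * t) | Q x} := by
      rw [card_filter, card_filter, card_filter, sum_Ico_consecutive _ t.zero_le (by omega),
        range_eq_Ico, two_mul]
    simp only [g, zero_add]
    omega
  rcases le_total (g 0) 0 with h0 | h0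
  · obtain ⟨l, hl, hgl⟩ := exists_eq_zero_of_abs_sub_le_one g hstep (t := t) h0 (by omega)
    exact ⟨l, hl, by simp only [g] at hgl; omega⟩
  · obtain ⟨l, hl, hgl⟩ := exists_eq_zero_of_abs_sub_le_one (-g ·)
      (fun i => by rw [neg_sub_neg, abs_sub_comm]; exact hstep i) (t := t) (by omega) (by omega)
    exact ⟨l, hl, by simp only [g] at hgl; omega⟩

theorem card_filter_eq_card_filter_range_nth (L : Finset ℕ) (Q : ℕ → Prop) [DecidablePred Q] :
    #{x ∈ L | Q x} = #{i ∈ range #L | Q (Nat.nth (· ∈ L) i)} := by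
  have hL : (Set.ofPred (· ∈ L)).Finite := L.finite_toSet
  have hcard : #hL.toFinset = #L := congrArg card L.finite_toSet_toFinset
  refine card_nbij' (Nat.count (· ∈ L)) (Nat.nth (· ∈ L)) (fun x hx => ?_) (fun i hi => ?_)
    (fun x hx => Nat.nth_count (mem_filter.1 hx).1) (fun i hi => ?_)
  · obtain ⟨hxL, hQ⟩ := mem_filter.1 hx
    exact mem_filter.2 ⟨mem_range.2 (hcard ▸ Nat.count_lt_card hL hxL), by rwa [Nat.nth_count hxL]⟩
  · obtain ⟨hi, hQ⟩ := mem_filter.1 hi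
    exact mem_filter.2 ⟨Nat.nth_mem_of_lt_card hL (hcard ▸ mem_range.1 hi), hQ⟩
  · exact Nat.count_nth_of_lt_card_finite hL (hcard ▸ mem_range.1 (mem_filter.1 hi).1)

theorem card_filter_eq_zero_add_card_filter_eq_one {α : Type*} (s : Finset α) (c : α → Fin 2) :
    #{x ∈ s | c x = 0} + #{x ∈ s | c x = 1} = #s := by
  rw [← card_filter_add_card_filter_not (s := s) (fun x => c x = 0)]
  exact congrArg (_ + card ·)
    (filter_congr fun x _ => ⟨fun h => by simp [h], Fin.eq_one_of_ne_zero _⟩)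

theorem exists_Ico_card_filter_eq_half (L : Finset ℕ) (c : ℕ → Fin 2) (z : Fin 2 → ℕ)
    (h : ∀ i, #{x ∈ L | c x = i} = 2 * z i) :
    ∃ a b, ∀ i, #{x ∈ L | x ∈ Ico a b ∧ c x = i} = z i := by
  set t := z 0 + z 1 with ht_def
  have hL : #L = 2 * t := by rw [← card_filter_eq_zero_add_card_filter_eq_one L c, h, h]; ring
  rcases Nat.eq_zero_or_pos t with ht | ht
  · refine ⟨0, 0, Fin.forall_fin_two.2 ⟨?_, ?_⟩⟩ <;>
      simp only [Ico_self, notMem_empty, false_and, filter_false, card_empty] <;> omega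
  have hfin : (Set.ofPred (· ∈ L)).Finite := L.finite_toSet
  have hcard : #hfin.toFinset = 2 * t := (congrArg card L.finite_toSet_toFinset).trans hL
  obtain ⟨l, hlt, hl⟩ := exists_card_filter_Ico_add_eq_half (fun i => c (Nat.nth (· ∈ L) i) = 0)
    (t := t) (z := z 0)
    (by rw [← hL, ← card_filter_eq_card_filter_range_nth L (c · = 0), h])
  have hwindow (i : Fin 2) : #{x ∈ L | x ∈ Ico (Nat.nth (· ∈ L) l)
      (Nat.nth (· ∈ L) (l + t - 1) + 1) ∧ c x = i} =
      #{j ∈ Ico l (l + t) | c (Nat.nth (· ∈ L) j) = i} := by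
    rw [card_filter_eq_card_filter_range_nth]
    congr 1
    ext j
    simp only [mem_filter, mem_range, mem_Ico, Nat.lt_succ_iff, hL]
    constructor
    · rintro ⟨hj, ⟨hlj, hjr⟩, hc⟩
      exact ⟨⟨Nat.le_of_nth_le_nth_of_lt_card hfin hlj (by omega),
        by have := Nat.le_of_nth_le_nth_of_lt_card hfin hjr (by omega); omega⟩, hc⟩
    · rintro ⟨⟨hlj, hjr⟩, hc⟩
      exact ⟨by omega, ⟨Nat.nth_le_nth_of_lt_card hfin hlj (by omega),
        Nat.nth_le_nth_of_lt_card hfin (by omega) (by omega)⟩, hc⟩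
  refine ⟨_, _, Fin.forall_fin_two.2 ⟨(hwindow 0).trans hl, ?_⟩⟩
  have := card_filter_eq_zero_add_card_filter_eq_one (Ico l (l + t)) (c <| Nat.nth (· ∈ L) ·)
  rw [Nat.card_Ico, Nat.add_sub_cancel_left] at this
  rw [hwindow]
  omega

theorem card_filter_comp_swap {β : Type*} [DecidableEq β] (s : Finset β) {x y : β} (hx : x ∈ s)
    (hy : y ∈ s) (Q : β → Prop) [DecidablePred Q] :
    #{p ∈ s | Q (Equiv.swap x y p)} = #{p ∈ s | Q p} := by
  have hs (p : β) (hp : p ∈ s) : Equiv.swap x y p ∈ s := by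
    rw [Equiv.swap_apply_def]
    split_ifs <;> assumption
  refine card_nbij' (Equiv.swap x y) (Equiv.swap x y) (fun p hp => ?_) (fun p hp => ?_)
    (fun p _ => Equiv.swap_apply_self x y p) (fun p _ => Equiv.swap_apply_self x y p)
  · obtain ⟨hp, hQ⟩ := mem_filter.1 hp
    exact mem_filter.2 ⟨hs p hp, hQ⟩
  · obtain ⟨hp, hQ⟩ := mem_filter.1 hp
    exact mem_filter.2 ⟨hs p hp, by rwa [Equiv.swap_apply_self]⟩

theorem card_filter_filter_or_eq_add {α : Type*} [DecidableEq α] (s : Finset ℕ) (f : ℕ → α)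
    {A B : α} (hAB : A ≠ B) (Q : ℕ → Prop) [DecidablePred Q] :
    #{p ∈ {p ∈ s | f p = A ∨ f p = B} | Q p} =
      #{p ∈ s | f p = A ∧ Q p} + #{p ∈ s | f p = B ∧ Q p} := by
  rw [filter_filter, ← card_union_of_disjoint
    (disjoint_filter.2 fun p _ h1 h2 => hAB (h1.1.symm.trans h2.1)), ← filter_or]
  simp only [or_and_right]

section reassign

variable {α : Type*} [DecidableEq α] {A B : α}

def reassign (f : ℕ → α) (A B : α) (I : Finset ℕ) (p : ℕ) : α :=
  if f p = A ∨ f p = B then if p ∈ I then A else B else f p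

variable {f : ℕ → α} {I : Finset ℕ} {p : ℕ}

theorem reassign_eq_left_iff (hAB : A ≠ B) :
    reassign f A B I p = A ↔ (f p = A ∨ f p = B) ∧ p ∈ I := by
  unfold reassign
  split_ifs <;> simp_all [Ne.symm hAB]

theorem reassign_eq_right_iff (hAB : A ≠ B) :
    reassign f A B I p = B ↔ (f p = A ∨ f p = B) ∧ p ∉ I := by
  unfold reassign
  split_ifs <;> simp_all

theorem reassign_eq_iff_of_ne {a : α} (hA : a ≠ A) (hB : a ≠ B) :
    reassign f A B I p = a ↔ f p = a := by
  unfold reassign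
  split_ifs with h
  · exact iff_of_false (Ne.symm hA) (by rintro rfl; tauto)
  · exact iff_of_false (Ne.symm hB) (by rintro rfl; tauto)
  · rfl

theorem card_filter_reassign {κ : Type*} [DecidableEq κ] {s : Finset ℕ} (hAB : A ≠ B)
    {c c' : ℕ → κ} {N : κ → ℕ} (hf : ∀ a i, #{p ∈ s | f p = a ∧ c p = i} = N i)
    (hc : ∀ p, f p ≠ A → f p ≠ B → c' p = c p)
    (hI : ∀ i, #{p ∈ {p ∈ s | f p = A ∨ f p = B} | p ∈ I ∧ c' p = i} = N i)
    (hpair : ∀ i, #{p ∈ {p ∈ s | f p = A ∨ f p = B} | c' p = i} = 2 * N i) (a : α) (i : κ) :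
    #{p ∈ s | reassign f A B I p = a ∧ c' p = i} = N i := by
  simp only [filter_filter] at hI hpair
  by_cases haA : a = A
  · rw [haA, ← hI i]
    exact congrArg card (filter_congr fun p _ => by rw [reassign_eq_left_iff hAB, and_assoc])
  by_cases haB : a = B
  · rw [haB]
    have hsplit := card_filter_add_card_filter_not
      (s := {p ∈ s | (f p = A ∨ f p = B) ∧ c' p = i}) (· ∈ I)
    simp only [filter_filter] at hsplit
    have hin : #{p ∈ s | ((f p = A ∨ f p = B) ∧ c' p = i) ∧ p ∈ I} = N i :=
      (congrArg card (filter_congr fun p _ => by tauto)).trans (hI i)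
    have hout : #{p ∈ s | reassign f A B I p = B ∧ c' p = i} =
        #{p ∈ s | ((f p = A ∨ f p = B) ∧ c' p = i) ∧ p ∉ I} :=
      congrArg card (filter_congr fun p _ => by rw [reassign_eq_right_iff hAB]; tauto)
    have := hpair i
    omega
  · rw [← hf a i]
    refine congrArg card (filter_congr fun p _ => ?_)
    rw [reassign_eq_iff_of_ne haA haB]
    exact and_congr_right fun hp => by rw [hc p (by rwa [hp]) (by rwa [hp])]

end reassign

theorem card_cuts_reassign_add_le {α : Type*} [DecidableEq α] (f : ℕ → α) {A B : α} (hAB : A ≠ B)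
    (a b n : ℕ) :
    #{p ∈ range n | reassign f A B (Ico a b) p ≠ reassign f A B (Ico a b) (p + 1)} +
      #{p ∈ range n | s(f p, f (p + 1)) = s(A, B)} ≤ #{p ∈ range n | f p ≠ f (p + 1)} + 2 := by
  set g := reassign f A B (Ico a b)
  set X := {p ∈ range n | f p ≠ f (p + 1) ∧ s(f p, f (p + 1)) ≠ s(A, B)}
  have hsplit : #X + #{p ∈ range n | s(f p, f (p + 1)) = s(A, B)} =
      #{p ∈ range n | f p ≠ f (p + 1)} := by
    have h := card_filter_add_card_filter_not (s := {p ∈ range n | f p ≠ f (p + 1)})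
      (fun p => s(f p, f (p + 1)) ≠ s(A, B))
    rw [filter_filter, filter_filter] at h
    rw [← h]
    congr 1
    refine congrArg card (filter_congr fun p _ => ⟨fun hs => ⟨fun hp => ?_, not_not.2 hs⟩,
      fun hs => not_not.1 hs.2⟩)
    rw [hp, Sym2.eq_iff] at hs
    exact hAB (by obtain ⟨rfl, rfl⟩ | ⟨rfl, rfl⟩ := hs <;> rfl)
  have hcuts : {p ∈ range n | g p ≠ g (p + 1)} ⊆ X ∪ {a - 1, b - 1} := by
    intro p hp
    obtain ⟨hpn, hg⟩ := mem_filter.1 hp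
    by_cases hP : (f p = A ∨ f p = B) ∧ (f (p + 1) = A ∨ f (p + 1) = B)
    · refine mem_union_right _ ?_
      simp only [g, reassign, if_pos hP.1, if_pos hP.2, mem_Ico] at hg
      simp only [mem_insert, mem_singleton]
      split_ifs at hg <;> first | exact absurd rfl hg | omega
    · refine mem_union_left _ (mem_filter.2 ⟨hpn, fun hf => hg ?_, fun hs => hP ?_⟩)
      · have hp' : ¬(f p = A ∨ f p = B) := fun h => hP ⟨h, hf ▸ h⟩
        simp only [g, reassign, if_neg (hf ▸ hp'), hf]
      · rcases Sym2.eq_iff.1 hs with ⟨h1, h2⟩ | ⟨h1, h2⟩ <;> simp [h1, h2]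
  calc _ ≤ #(X ∪ {a - 1, b - 1}) + #{p ∈ range n | s(f p, f (p + 1)) = s(A, B)} := by
        gcongr
    _ ≤ #X + 2 + #{p ∈ range n | s(f p, f (p + 1)) = s(A, B)} := by
        gcongr
        exact (card_union_le _ _).trans (by gcongr; exact card_le_two)
    _ = _ := by omega

namespace List

variable {α : Type*}

def adjCount (R : α → α → Prop) [DecidableRel R] : List α → ℕ
  | a :: b :: l => (if R a b then 1 else 0) + adjCount R (b :: l)
  | _ => 0

section adjCount

variable (R : α → α → Prop) [DecidableRel R]

@[simp] theorem adjCount_singleton (a : α) : adjCount R [a] = 0 := rfl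

theorem adjCount_cons_cons (a b : α) (l : List α) :
    adjCount R (a :: b :: l) = (if R a b then 1 else 0) + adjCount R (b :: l) := rfl

theorem adjCount_append_cons (l₁ : List α) (a : α) (l₂ : List α) :
    adjCount R (l₁ ++ a :: l₂) = adjCount R (l₁ ++ [a]) + adjCount R (a :: l₂) := by
  induction l₁ with
  | nil => simp
  | cons b l₁ ih =>
    cases l₁ with
    | nil => simp [adjCount_cons_cons]
    | cons c l₁ =>
      simp only [cons_append] at ih ⊢
      rw [adjCount_cons_cons, adjCount_cons_cons, ih, Nat.add_assoc]

theorem adjCount_replicate_append {x : α} (hx : ¬R x x) (n : ℕ) (l : List α) :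
    adjCount R (replicate (n + 1) x ++ l) = adjCount R (x :: l) := by
  induction n with
  | zero => rfl
  | succ n ih => rw [replicate_succ, cons_append, replicate_succ, cons_append,
      adjCount_cons_cons, if_neg hx, Nat.zero_add, ← cons_append, ← replicate_succ, ih]

theorem adjCount_append_replicate_append {x : α} (hx : ¬R x x) (U : List α) (n : ℕ)
    (V : List α) : adjCount R (U ++ replicate (n + 1) x ++ V) = adjCount R (U ++ x :: V) := by
  rw [append_assoc, replicate_succ, cons_append, adjCount_append_cons, ← cons_append,
    ← replicate_succ, adjCount_replicate_append R hx, ← adjCount_append_cons]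

theorem adjCount_cons_le (x : α) (l : List α) : adjCount R (x :: l) ≤ adjCount R l + 1 := by
  cases l with
  | nil => simp
  | cons y l => rw [adjCount_cons_cons]; split_ifs <;> omega

theorem adjCount_append_singleton_le (l : List α) (x : α) :
    adjCount R (l ++ [x]) ≤ adjCount R l + 1 := by
  rcases eq_nil_or_concat' l with rfl | ⟨l, y, rfl⟩
  · simp
  · rw [append_assoc, singleton_append, adjCount_append_cons, adjCount_cons_cons]
    split_ifs <;> simp

theorem adjCount_insert_between (U : List α) (u x v : α) (V : List α) :
    adjCount R (U ++ u :: x :: v :: V) + (if R u v then 1 else 0) =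
      adjCount R (U ++ u :: v :: V) + (if R u x then 1 else 0) + (if R x v then 1 else 0) := by
  rw [adjCount_append_cons R U u (x :: v :: V), adjCount_append_cons R U u (v :: V),
    adjCount_cons_cons, adjCount_cons_cons, adjCount_cons_cons]
  omega

end adjCount

def IsRankNested {β : Type*} [LT β] (rk : α → β) (l : List α) : Prop :=
  ∀ a c, [a, c, a] <+ l → c ≠ a → rk c < rk a

theorem IsRankNested.sublist {β : Type*} [LT β] {rk : α → β} {l l' : List α}
    (h : l.IsRankNested rk) (hl' : l' <+ l) : l'.IsRankNested rk :=
  fun a c hac => h a c (hac.trans hl')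

variable [DecidableEq α]

theorem adjCount_ne_append_cons_le_or {U V : List α} {x : α} (hU : x ∉ U) (hV : x ∉ V)
    (R : α → α → Prop) [DecidableRel R] (hsymm : ∀ a b, R a b → R b a) (hirr : ∀ a, ¬R a a) :
    adjCount (· ≠ ·) (U ++ x :: V) ≤ adjCount (· ≠ ·) (U ++ V) + 1 ∨
      adjCount (· ≠ ·) (U ++ x :: V) = adjCount (· ≠ ·) (U ++ V) + 2 ∧
        ∃ r, adjCount R (U ++ x :: V) = adjCount R (U ++ V) + 2 * r := by
  rcases eq_nil_or_concat' U with rfl | ⟨U, u, rfl⟩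
  · exact .inl (adjCount_cons_le _ x V)
  rcases V with _ | ⟨v, V⟩
  · exact .inl (by simpa using adjCount_append_singleton_le _ (U ++ [u]) x)
  have hux : u ≠ x := fun h => hU (by simp [h])
  have hxv : x ≠ v := fun h => hV (by simp [h])
  simp only [append_assoc, singleton_append]
  have hne := adjCount_insert_between (· ≠ ·) U u x v V
  by_cases huv : u = v
  · subst huv
    have hR := adjCount_insert_between R U u x u V
    have hxu : R x u ↔ R u x := ⟨hsymm x u, hsymm u x⟩
    rw [if_pos hux, if_pos hxv, if_neg (not_not.2 rfl)] at hne
    rw [if_neg (hirr u)] at hR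
    simp only [hxu] at hR
    exact .inr ⟨by omega, if R u x then 1 else 0, by omega⟩
  · rw [if_pos hux, if_pos hxv, if_pos huv] at hne
    exact .inl (by omega)

theorem exists_eq_append_replicate_append {x : α} :
    ∀ {l : List α}, x ∈ l → (∀ c, [x, c, x] <+ l → c = x) →
      ∃ U n V, l = U ++ replicate (n + 1) x ++ V ∧ x ∉ U ∧ x ∉ V
  | y :: l, hx, hcont => by
    by_cases hy : y = x
    · subst hy
      by_cases hl : y ∈ l
      · obtain ⟨U, n, V, rfl, hU, hV⟩ :=
          exists_eq_append_replicate_append hl fun c hc => hcont c (hc.cons _)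
        obtain rfl : U = [] := eq_nil_iff_forall_not_mem.2 fun u hu => by
          have : [u, y] <+ U ++ replicate (n + 1) y ++ V :=
            ((singleton_sublist.2 hu).append (singleton_sublist.2 (mem_replicate.2
              ⟨n.succ_ne_zero, rfl⟩))).trans (sublist_append_left _ _)
          exact hU (hcont u (this.cons_cons y) ▸ hu)
        exact ⟨[], n + 1, V, by simp [replicate_succ], by simp, hV⟩
      · exact ⟨[], 0, l, by simp, by simp, hl⟩
    · obtain ⟨U, n, V, rfl, hU, hV⟩ := exists_eq_append_replicate_append
        ((mem_cons.1 hx).resolve_left (Ne.symm hy)) fun c hc => hcont c (hc.cons _)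
      exact ⟨y :: U, n, V, rfl, by simp [Ne.symm hy, hU], hV⟩

namespace IsRankNested

variable {β : Type*} [LinearOrder β] {rk : α → β}

theorem exists_eq_append_replicate_append {l : List α} (h : l.IsRankNested rk) (hl : l ≠ []) :
    ∃ U n x V, l = U ++ replicate (n + 1) x ++ V ∧ x ∉ U ∧ x ∉ V := by
  obtain ⟨x, hx, hmin⟩ := l.toFinset.exists_min_image rk (by simpa using hl)
  obtain ⟨U, n, V, hUV⟩ := List.exists_eq_append_replicate_append (mem_toFinset.1 hx)
    fun c hc => by_contra fun hcx =>
      (h x c hc hcx).not_ge (hmin c (mem_toFinset.2 (hc.subset (by simp))))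
  exact ⟨U, n, x, V, hUV⟩

theorem adjCount_ne_add_two_le (R : α → α → Prop) [DecidableRel R]
    (hsymm : ∀ a b, R a b → R b a) (hirr : ∀ a, ¬R a a) {l : List α} (h : l.IsRankNested rk)
    (hl : l ≠ []) :
    adjCount (· ≠ ·) l + 2 ≤ 2 * l.toFinset.card ∧
      (adjCount R l = 1 → adjCount (· ≠ ·) l + 3 ≤ 2 * l.toFinset.card) := by
  obtain ⟨U, n, x, V, hl_eq, hU, hV⟩ := h.exists_eq_append_replicate_append hl
  have hlen : (U ++ V).length < l.length := by simp [hl_eq]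
  rw [hl_eq] at h ⊢
  have hcard : (U ++ replicate (n + 1) x ++ V).toFinset.card = (U ++ V).toFinset.card + 1 := by
    rw [← card_insert_of_notMem (s := (U ++ V).toFinset) (by simpa using ⟨hU, hV⟩)]
    congr 1
    ext y
    simp only [List.toFinset_append, mem_union, mem_toFinset, mem_replicate, mem_insert]
    tauto
  rw [hcard, adjCount_append_replicate_append _ (not_not.2 rfl),
    adjCount_append_replicate_append R (hirr x)]
  by_cases hUV : U ++ V = []
  · obtain ⟨rfl, rfl⟩ := append_eq_nil_iff.1 hUV
    simp
  have hsub : U ++ V <+ U ++ replicate (n + 1) x ++ V := by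
    rw [append_assoc]
    exact (sublist_append_right _ V).append_left U
  have ih := adjCount_ne_add_two_le R hsymm hirr (h.sublist hsub) hUV
  rcases adjCount_ne_append_cons_le_or hU hV R hsymm hirr with hc | ⟨hc, r, hr⟩ <;> omega
termination_by l.length
decreasing_by exact hlen

end IsRankNested

end List

theorem card_filter_range_eq_adjCount {α : Type*} (R : α → α → Prop) [DecidableRel R]
    (f : ℕ → α) (n : ℕ) :
    #{p ∈ range n | R (f p) (f (p + 1))} = ((List.range (n + 1)).map f).adjCount R := by
  induction n with
  | zero => simp
  | succ n ih =>
    rw [List.range_succ, List.map_append, List.map_singleton, List.range_succ, List.map_append,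
      List.map_singleton, List.append_assoc, List.singleton_append, List.adjCount_append_cons,
      List.adjCount_cons_cons, ← List.map_singleton, ← List.map_append, ← List.range_succ, ← ih,
      range_add_one, filter_insert]
    split_ifs with h
    · rw [card_insert_of_notMem (by simp), List.adjCount_singleton]
    · simp

theorem GreedyStructure.exists_isRankNested {k : ℕ} {f : ℕ → Fin k} (hf : GreedyStructure k f)
    (m : ℕ) : ∃ rk : Fin k → Fin k, ((List.range m).map f).IsRankNested rk := by
  obtain ⟨ord, hord, hnest⟩ := hf
  let e := Equiv.ofBijective ord hord
  refine ⟨e.symm, fun a c hsub hca => ?_⟩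
  obtain ⟨l', hl', hmap⟩ := List.sublist_map_iff.1 hsub
  rcases l' with _ | ⟨p, _ | ⟨r, _ | ⟨q, _ | ⟨_, _⟩⟩⟩⟩ <;>
    simp only [List.map_cons, List.map_nil, List.cons.injEq, reduceCtorEq, and_false,
      and_true] at hmap
  obtain ⟨rfl, rfl, hq⟩ := hmap
  have hlt := List.pairwise_cons.1 (List.pairwise_lt_range.sublist hl')
  rcases hnest (e.symm (f p)) p q r (hlt.1 r (by simp))
      ((List.pairwise_cons.1 hlt.2).1 q (by simp)) (e.apply_symm_apply _).symm
      (hq ▸ (e.apply_symm_apply _).symm) with h | ⟨s, hs, hrs⟩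
  · exact absurd (h.trans (e.apply_symm_apply _)) hca
  · rwa [hrs, show ord s = e s from rfl, e.symm_apply_apply]

theorem GreedyStructure.card_cuts_add_three_le {k : ℕ} {f : ℕ → Fin k}
    (hf : GreedyStructure k f) {A B : Fin k} (hAB : A ≠ B) {n : ℕ}
    (h : #{p ∈ range n | s(f p, f (p + 1)) = s(A, B)} = 1) :
    #{p ∈ range n | f p ≠ f (p + 1)} + 3 ≤ 2 * k := by
  obtain ⟨rk, hrk⟩ := hf.exists_isRankNested (n + 1)
  rw [card_filter_range_eq_adjCount (fun x y => s(x, y) = s(A, B))] at h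
  rw [card_filter_range_eq_adjCount (· ≠ ·) f n]
  have hirr (a : Fin k) : s(a, a) ≠ s(A, B) := fun h =>
    hAB (by obtain ⟨rfl, rfl⟩ | ⟨rfl, rfl⟩ := Sym2.eq_iff.1 h <;> rfl)
  calc _ ≤ 2 * ((List.range (n + 1)).map f).toFinset.card :=
        (hrk.adjCount_ne_add_two_le (fun x y => s(x, y) = s(A, B))
          (fun _ _ h => Sym2.eq_swap.trans h) hirr (by simp)).2 h
    _ ≤ 2 * k := by
        gcongr
        exact (card_le_univ _).trans (Fintype.card_fin k).le

theorem swap_preserves_fair_division_general (m k : ℕ) (S : ℕ → Fin 2)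
    (owner : ℕ → Fin k)
    (hfair : ∀ (a : Fin k) (i : Fin 2),
      ((Finset.range m).filter (fun p => owner p = a ∧ S p = i)).card
        = ((Finset.range m).filter (fun p => S p = i)).card / k)
    (hcuts : ((Finset.range (m - 1)).filter (fun p => owner p ≠ owner (p + 1))).card
        ≤ 2 * (k - 1))
    (hgreedy : GreedyStructure k owner)
    (j : ℕ) (hj : j + 1 < m)
    (hown : owner j ≠ owner (j + 1)) :
    ∃ owner' : ℕ → Fin k,
      (∀ (a : Fin k) (i : Fin 2),
        ((Finset.range m).filter (fun p => owner' p = a ∧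
            (Function.update (Function.update S j (S (j + 1))) (j + 1) (S j)) p = i)).card
          = ((Finset.range m).filter (fun p => S p = i)).card / k) ∧
      ((Finset.range (m - 1)).filter (fun p => owner' p ≠ owner' (p + 1))).card
        ≤ 2 * (k - 1) ∧
      ∀ p, owner p ≠ owner j → owner p ≠ owner (j + 1) → owner' p = owner p := by
  have hpair (i : Fin 2) :
      #{p ∈ {p ∈ range m | owner p = owner j ∨ owner p = owner (j + 1)} |
        (S ∘ Equiv.swap (j + 1) j) p = i} = 2 * (#{p ∈ range m | S p = i} / k) :=
    (card_filter_comp_swap _ (mem_filter.2 ⟨mem_range.2 hj, .inr rfl⟩)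
      (mem_filter.2 ⟨mem_range.2 (by omega), .inl rfl⟩) (S · = i)).trans
      ((card_filter_filter_or_eq_add _ _ hown _).trans (by rw [hfair, hfair, two_mul]))
  rw [Equiv.comp_swap_eq_update] at hpair
  obtain ⟨a, b, hab⟩ := exists_Ico_card_filter_eq_half _ _ _ hpair
  refine ⟨reassign owner (owner j) (owner (j + 1)) (Ico a b),
    card_filter_reassign hown hfair (fun p hA hB => ?_) hab hpair, ?_,
    fun p hA hB => (reassign_eq_iff_of_ne hA hB).2 rfl⟩
  · rw [Function.update_of_ne fun h => hB (congrArg owner h),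
      Function.update_of_ne fun h => hA (congrArg owner h)]
  have hcut := card_cuts_reassign_add_le owner hown a b (m - 1)
  have hj_cut : 1 ≤ #{p ∈ range (m - 1) | s(owner p, owner (p + 1)) = s(owner j, owner (j + 1))} :=
    card_pos.2 ⟨j, mem_filter.2 ⟨mem_range.2 (by omega), rfl⟩⟩
  rcases hj_cut.eq_or_lt with hone | htwo
  · have := hgreedy.card_cuts_add_three_le hown hone.symm
    omega
  · omega

/-- After swapping two adjacent beads of different colors belonging to two
different agents in a greedily-obtained fair division with at most 2(k−1) cuts,
there is a fair division of the modified necklace with at most 2(k−1) cuts that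
agrees with the original one on all beads not belonging to those two agents. -/
theorem swap_preserves_fair_division (m k : ℕ) (hk : 0 < k) (S : ℕ → Fin 2)
    (owner : ℕ → Fin k)
    (hdvd : ∀ i : Fin 2, k ∣ ((Finset.range m).filter (fun p => S p = i)).card)
    (hfair : ∀ (a : Fin k) (i : Fin 2),
      ((Finset.range m).filter (fun p => owner p = a ∧ S p = i)).card
        = ((Finset.range m).filter (fun p => S p = i)).card / k)
    (hcuts : ((Finset.range (m - 1)).filter (fun p => owner p ≠ owner (p + 1))).card
        ≤ 2 * (k - 1))
    (hgreedy : GreedyStructure k owner)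
    (j : ℕ) (hj : j + 1 < m) (hcol : S j ≠ S (j + 1))
    (hown : owner j ≠ owner (j + 1)) :
    ∃ owner' : ℕ → Fin k,
      (∀ (a : Fin k) (i : Fin 2),
        ((Finset.range m).filter (fun p => owner' p = a ∧
            (Function.update (Function.update S j (S (j + 1))) (j + 1) (S j)) p = i)).card
          = ((Finset.range m).filter (fun p => S p = i)).card / k) ∧
      ((Finset.range (m - 1)).filter (fun p => owner' p ≠ owner' (p + 1))).card
        ≤ 2 * (k - 1) ∧
      ∀ p, owner p ≠ owner j → owner p ≠ owner (j + 1) → owner' p = owner p :=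
  swap_preserves_fair_division_general m k S owner hfair hcuts hgreedy j hj hown
end
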